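/- Let M be a connected topological space with a Borel measure μ and let Ω : M × M → ℂ be continuous and satisfy propagator conditions (1)–(5). Let P_Ω be the associated orthogonal projection on L²(M, μ) and, for z ∈ M, let q_z be the coherent-state projection. If V ⊆ L²(M, μ) is a closed subspace contained in the range of P_Ω and invariant under q_z for every z ∈ M (q_z(V) ⊆ V), then V = {0} or V equals the range of P_Ω. In other words, the range of P_Ω is an irreducible representation of the family {q_z : z ∈ M}. -/

import Mathlib

/-!
Write `e x = Ω x ·` for the coherent states in `L²(M, μ)`. The propagator identities give
`⟪e x, e y⟫ = Ω y x`, `(P Ψ) x = ⟪e x, Ψ⟫` and `q_z Ψ = ⟪e z, Ψ⟫ • e z`. Since `P` fixes every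
`e x` and kills their orthogonal complement, its range is the closed span of the coherent
states. A nonzero closed invariant `V` in that span is not orthogonal to all of them, so
it contains some `e z₀`. The set of `z` with `e z ∈ V` is closed, as `z ↦ e z` is
continuous, and open, as `q_y (e z) = ⟪e y, e z⟫ • e y` with `⟪e y, e z⟫ ≠ 0` for `y` near
`z`; by connectedness it is all of `M`, so `V` contains the closed span.
-/

open MeasureTheory Filter Topology Set Submodule
open scoped InnerProductSpace ComplexConjugate

section HilbertSpace

variable {𝕜 E : Type*} [RCLike 𝕜] [NormedAddCommGroup E] [InnerProductSpace 𝕜 E]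

theorem mem_orthogonal_span_range_iff {ι : Type*} {e : ι → E} {v : E} :
    v ∈ (span 𝕜 (range e))ᗮ ↔ ∀ i, ⟪e i, v⟫_𝕜 = 0 := by
  refine ⟨fun hv i => hv _ (subset_span ⟨i, rfl⟩), fun hv => ?_⟩
  rw [mem_orthogonal']
  have : span 𝕜 (range e) ≤ LinearMap.ker (innerₛₗ 𝕜 v) := by
    rw [span_le]
    rintro _ ⟨i, rfl⟩
    simpa [inner_eq_zero_symm] using hv i
  exact fun u hu => this hu

theorem continuous_of_continuous_inner {X : Type*} [TopologicalSpace X] {e : X → E}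
    (he : Continuous fun p : X × X => ⟪e p.1, e p.2⟫_𝕜) : Continuous e := by
  have hinner : ∀ {f g : X → X}, Continuous f → Continuous g →
      Continuous fun x => ⟪e (f x), e (g x)⟫_𝕜 :=
    fun hf hg => he.comp (hf.prodMk hg)
  refine continuous_iff_continuousAt.2 fun a => tendsto_iff_norm_sub_tendsto_zero.2 ?_
  have hdist : Continuous fun x => RCLike.re ⟪e x - e a, e x - e a⟫_𝕜 := by
    simp only [inner_sub_left, inner_sub_right]
    exact RCLike.continuous_re.comp
      (((hinner continuous_id continuous_id).sub (hinner continuous_const continuous_id)).sub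
        ((hinner continuous_id continuous_const).sub (hinner continuous_const continuous_const)))
  convert (Real.continuous_sqrt.comp hdist).tendsto a using 2
  · exact norm_eq_sqrt_re_inner _
  · simp

theorem eq_zero_of_mem_topologicalClosure_span {ι : Type*} {e : ι → E} {v : E}
    (hv : v ∈ (span 𝕜 (range e)).topologicalClosure) (he : ∀ i, ⟪e i, v⟫_𝕜 = 0) : v = 0 := by
  have hperp : v ∈ (span 𝕜 (range e)).topologicalClosureᗮ := by
    rw [orthogonal_closure]
    exact mem_orthogonal_span_range_iff.2 he
  exact inner_self_eq_zero.1 (hperp v hv)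

theorem range_eq_topologicalClosure_span [CompleteSpace E] {ι : Type*} {e : ι → E}
    {P : E →L[𝕜] E} (hfix : ∀ i, P (e i) = e i)
    (hkill : ∀ u, (∀ i, ⟪e i, u⟫_𝕜 = 0) → P u = 0) :
    LinearMap.range (P : E →ₗ[𝕜] E) = (span 𝕜 (range e)).topologicalClosure := by
  set W := (span 𝕜 (range e)).topologicalClosure
  have hPW : ∀ w ∈ W, P w = w := by
    have : W ≤ LinearMap.ker ((P - 1 : E →L[𝕜] E) : E →ₗ[𝕜] E) := by
      refine topologicalClosure_minimal _ ?_ (ContinuousLinearMap.isClosed_ker _)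
      rw [span_le]
      rintro _ ⟨i, rfl⟩
      simp [hfix]
    intro w hw
    simpa [sub_eq_zero] using this hw
  have : CompleteSpace W := (isClosed_topologicalClosure _).completeSpace_coe
  refine le_antisymm ?_ fun w hw => ⟨w, hPW w hw⟩
  rintro _ ⟨u, rfl⟩
  have hperp : P (u - W.starProjection u) = 0 := by
    refine hkill _ (mem_orthogonal_span_range_iff.1 ?_)
    rw [← orthogonal_closure]
    exact sub_starProjection_mem_orthogonal u
  rw [map_sub, sub_eq_zero, hPW _ (W.starProjection_apply_mem u)] at hperp
  rw [ContinuousLinearMap.coe_coe, hperp]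
  exact W.starProjection_apply_mem u

section Irreducible

variable {X : Type*} {e : X → E} {V : Submodule 𝕜 E}

theorem exists_mem_of_forall_inner_smul_mem (hVle : V ≤ (span 𝕜 (range e)).topologicalClosure)
    (hV : ∀ x, ∀ v ∈ V, ⟪e x, v⟫_𝕜 • e x ∈ V) (hVbot : V ≠ ⊥) : ∃ x, e x ∈ V := by
  obtain ⟨v, hvV, hv0⟩ := (Submodule.ne_bot_iff V).1 hVbot
  obtain ⟨x, hx⟩ : ∃ x, ⟪e x, v⟫_𝕜 ≠ 0 := by
    by_contra! h
    exact hv0 (eq_zero_of_mem_topologicalClosure_span (hVle hvV) h)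
  exact ⟨x, (V.smul_mem_iff hx).1 (hV x v hvV)⟩

theorem isClopen_setOf_mem_of_forall_inner_smul_mem [TopologicalSpace X] (he : Continuous e)
    (he0 : ∀ x, e x ≠ 0) (hVc : IsClosed (V : Set E)) (hV : ∀ x, ∀ v ∈ V, ⟪e x, v⟫_𝕜 • e x ∈ V) :
    IsClopen {x | e x ∈ V} := by
  refine ⟨hVc.preimage he, isOpen_iff_mem_nhds.2 fun x hx => ?_⟩
  have hnear : ∀ᶠ y in 𝓝 x, ⟪e y, e x⟫_𝕜 ≠ 0 :=
    (he.inner continuous_const).continuousAt.eventually_ne (inner_self_ne_zero.2 (he0 x))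
  filter_upwards [hnear] with y hy
  exact (V.smul_mem_iff hy).1 (hV y _ hx)

theorem eq_bot_or_eq_topologicalClosure_span_of_forall_inner_smul_mem [TopologicalSpace X]
    [ConnectedSpace X] (he : Continuous e) (he0 : ∀ x, e x ≠ 0) (hVc : IsClosed (V : Set E))
    (hVle : V ≤ (span 𝕜 (range e)).topologicalClosure)
    (hV : ∀ x, ∀ v ∈ V, ⟪e x, v⟫_𝕜 • e x ∈ V) :
    V = ⊥ ∨ V = (span 𝕜 (range e)).topologicalClosure := by
  refine or_iff_not_imp_left.2 fun hVbot => le_antisymm hVle ?_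
  have hall : {x | e x ∈ V} = univ :=
    (isClopen_setOf_mem_of_forall_inner_smul_mem he he0 hVc hV).eq_univ
      (exists_mem_of_forall_inner_smul_mem hVle hV hVbot)
  refine topologicalClosure_minimal _ (span_le.2 ?_) hVc
  rintro _ ⟨x, rfl⟩
  exact eq_univ_iff_forall.1 hall x

end Irreducible

end HilbertSpace

section CoherentState

variable {M : Type*} [MeasurableSpace M] {μ : Measure M} {Ω : M → M → ℂ}

theorem memLp_two_of_integrable_mul [TopologicalSpace M] [OpensMeasurableSpace M]
    (hcont : Continuous fun p : M × M => Ω p.1 p.2) (hconj : ∀ x y, Ω x y = conj (Ω y x))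
    (x : M) (hint : Integrable (fun z => Ω x z * Ω z x) μ) : MemLp (Ω x) 2 μ := by
  have hmeas : AEStronglyMeasurable (Ω x) μ :=
    (hcont.comp (Continuous.prodMk_right x)).aestronglyMeasurable
  rw [memLp_two_iff_integrable_sq_norm hmeas]
  refine hint.norm.congr (Eventually.of_forall fun y => ?_)
  show ‖Ω x y * Ω y x‖ = ‖Ω x y‖ ^ 2
  rw [norm_mul, hconj y x, Complex.norm_conj, sq]

noncomputable def coherentState (hmem : ∀ x, MemLp (Ω x) 2 μ) (x : M) : Lp ℂ 2 μ :=
  (hmem x).toLp (Ω x)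

variable (hmem : ∀ x, MemLp (Ω x) 2 μ)

theorem coherentState_ae_eq (x : M) : coherentState hmem x =ᵐ[μ] Ω x :=
  (hmem x).coeFn_toLp

theorem inner_coherentState_left (hconj : ∀ x y, Ω x y = conj (Ω y x)) (x : M)
    (Ψ : Lp ℂ 2 μ) : ⟪coherentState hmem x, Ψ⟫_ℂ = ∫ y, Ψ y * Ω y x ∂μ := by
  rw [L2.inner_def]
  refine integral_congr_ae ?_
  filter_upwards [coherentState_ae_eq hmem x] with y hy
  rw [RCLike.inner_apply', hy, ← hconj y x, mul_comm]

theorem inner_coherentState (hconj : ∀ x y, Ω x y = conj (Ω y x))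
    (hrep : ∀ x y, ∫ z, Ω x z * Ω z y ∂μ = Ω x y) (x y : M) :
    ⟪coherentState hmem x, coherentState hmem y⟫_ℂ = Ω y x := by
  rw [inner_coherentState_left hmem hconj, ← hrep y x]
  refine integral_congr_ae ?_
  filter_upwards [coherentState_ae_eq hmem y] with z hz
  rw [hz]

theorem continuous_coherentState [TopologicalSpace M]
    (hcont : Continuous fun p : M × M => Ω p.1 p.2) (hconj : ∀ x y, Ω x y = conj (Ω y x))
    (hrep : ∀ x y, ∫ z, Ω x z * Ω z y ∂μ = Ω x y) : Continuous (coherentState hmem) := by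
  refine continuous_of_continuous_inner (𝕜 := ℂ) ?_
  simp only [inner_coherentState hmem hconj hrep]
  exact hcont.comp continuous_swap

theorem coherentState_ne_zero (hconj : ∀ x y, Ω x y = conj (Ω y x))
    (hrep : ∀ x y, ∫ z, Ω x z * Ω z y ∂μ = Ω x y) (hdiag : ∀ x, Ω x x = 1) (x : M) :
    coherentState hmem x ≠ 0 := by
  rw [← inner_self_ne_zero (𝕜 := ℂ), inner_coherentState hmem hconj hrep, hdiag]
  exact one_ne_zero

variable {T : Lp ℂ 2 μ →L[ℂ] Lp ℂ 2 μ}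

theorem apply_coherentState_of_ae_eq_integral (hconj : ∀ x y, Ω x y = conj (Ω y x))
    (hrep : ∀ x y, ∫ z, Ω x z * Ω z y ∂μ = Ω x y)
    (hT : ∀ Ψ : Lp ℂ 2 μ, ∀ᵐ x ∂μ, T Ψ x = ∫ y, Ψ y * Ω y x ∂μ) (x : M) :
    T (coherentState hmem x) = coherentState hmem x := by
  refine Lp.ext ?_
  filter_upwards [hT (coherentState hmem x), coherentState_ae_eq hmem x] with y hy hy'
  rw [hy, hy', ← inner_coherentState_left hmem hconj, inner_coherentState hmem hconj hrep]

theorem apply_eq_zero_of_ae_eq_integral (hconj : ∀ x y, Ω x y = conj (Ω y x))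
    (hT : ∀ Ψ : Lp ℂ 2 μ, ∀ᵐ x ∂μ, T Ψ x = ∫ y, Ψ y * Ω y x ∂μ) (Ψ : Lp ℂ 2 μ)
    (hΨ : ∀ x, ⟪coherentState hmem x, Ψ⟫_ℂ = 0) : T Ψ = 0 := by
  rw [Lp.eq_zero_iff_ae_eq_zero]
  filter_upwards [hT Ψ] with x hx
  rw [hx, ← inner_coherentState_left hmem hconj, hΨ x]
  rfl

theorem apply_eq_inner_smul_coherentState (hconj : ∀ x y, Ω x y = conj (Ω y x)) (z : M)
    (hT : ∀ Ψ : Lp ℂ 2 μ, ∀ᵐ y ∂μ, T Ψ y = (∫ w, Ψ w * Ω w z ∂μ) * Ω z y) (Ψ : Lp ℂ 2 μ) :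
    T Ψ = ⟪coherentState hmem z, Ψ⟫_ℂ • coherentState hmem z := by
  refine Lp.ext ?_
  filter_upwards [hT Ψ, Lp.coeFn_smul ⟪coherentState hmem z, Ψ⟫_ℂ (coherentState hmem z),
    coherentState_ae_eq hmem z] with y hy hsmul hz
  rw [hy, hsmul, Pi.smul_apply, smul_eq_mul, hz, inner_coherentState_left hmem hconj]

end CoherentState

theorem physical_space_irreducible
    {M : Type*} [TopologicalSpace M] [ConnectedSpace M]
    [MeasurableSpace M] [BorelSpace M]
    (μ : Measure M)
    (Ω : M → M → ℂ)
    (hΩcont : Continuous fun p : M × M => Ω p.1 p.2)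
    (h1 : ∀ x, Ω x x = 1)
    (h3 : ∀ x y, Ω x y = (starRingEnd ℂ) (Ω y x))
    (h4int : ∀ x y, Integrable (fun z => Ω x z * Ω z y) μ)
    (h4 : ∀ x y, ∫ z, Ω x z * Ω z y ∂μ = Ω x y)
    (P : Lp ℂ 2 μ →L[ℂ] Lp ℂ 2 μ)
    (hP : ∀ Ψ : Lp ℂ 2 μ, ∀ᵐ x ∂μ, (P Ψ) x = ∫ y, Ψ y * Ω y x ∂μ)
    (qz : M → (Lp ℂ 2 μ →L[ℂ] Lp ℂ 2 μ))
    (hqz : ∀ z, ∀ Ψ : Lp ℂ 2 μ, ∀ᵐ y ∂μ,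
      (qz z Ψ) y = (∫ w, Ψ w * Ω w z ∂μ) * Ω z y) :
    ∀ V : Submodule ℂ (Lp ℂ 2 μ), IsClosed (V : Set (Lp ℂ 2 μ)) →
      V ≤ LinearMap.range (P : Lp ℂ 2 μ →ₗ[ℂ] Lp ℂ 2 μ) → (∀ z : M, ∀ ψ ∈ V, qz z ψ ∈ V) →
      V = ⊥ ∨ V = LinearMap.range (P : Lp ℂ 2 μ →ₗ[ℂ] Lp ℂ 2 μ) := by
  intro V hVc hVP hVinv
  have hmem x := memLp_two_of_integrable_mul hΩcont h3 x (h4int x x)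
  have hrange : LinearMap.range (P : Lp ℂ 2 μ →ₗ[ℂ] Lp ℂ 2 μ) =
      (span ℂ (range (coherentState hmem))).topologicalClosure :=
    range_eq_topologicalClosure_span (apply_coherentState_of_ae_eq_integral hmem h3 h4 hP)
      (apply_eq_zero_of_ae_eq_integral hmem h3 hP)
  rw [hrange] at hVP ⊢
  refine eq_bot_or_eq_topologicalClosure_span_of_forall_inner_smul_mem
    (continuous_coherentState hmem hΩcont h3 h4) (coherentState_ne_zero hmem h3 h4 h1) hVc hVP
    fun z ψ hψ => ?_
  rw [← apply_eq_inner_smul_coherentState hmem h3 z (hqz z)]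
  exact hVinv z ψ hψ
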